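/- Let g₁(x) = log(|x| + √(x² − 1)) for real x with |x| > 1 and g₁(x) = 0 for x ∈ [−1,1] (the Green function of ℂ \ [−1,1] with pole at infinity, restricted to the real line), and for z = (z_1, z_2) ∈ ℝ² set g(z) = g₁(z_1) + g₁(z_2). Then for every z ∈ ℝ² \ [−1,1]² and N = (n+1)² − 1: in the corner case |z_1| > 1 and |z_2| > 1 the quotient K_N^μ(z,z)/e^{2n·g(z)} converges as n → ∞ to a finite nonzero limit; otherwise (exactly one coordinate of z lies outside [−1,1]) the quotient K_N^μ(z,z)/((n+1)·e^{2n·g(z)}) converges as n → ∞ to a finite nonzero limit. -/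

import Mathlib

/-!
Both sides factor over the coordinates, so everything reduces to the univariate kernel on the
diagonal. Since `2 T_j² = T_{2j} + 1`, we have `K_n(x,x) = n + ∑_{j ≤ n} T_{2j}(x)`.
For `|x| > 1` write `|x| = cosh t` with `t = g₁(x) > 0`; then `T_{2j}(x) = cosh (2jt)`, a sum of
geometric series dominated by its last term, so `K_n(x,x) e^{-2nt} → e^{2t} / (2 (e^{2t} - 1))`.
For `|x| < 1` write `x = cos θ` with `sin θ > 0`; the sums `∑ cos (2jθ)` telescope against
`2 sin θ` and stay bounded, so `K_n(x,x) / (n+1) → 1`. At `x = ±1` every `T_{2j}(x)` is `1` and the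
limit is `2`.
-/

namespace CD2

/-- The Christoffel–Darboux kernel `K_n^ω(x,y)` of the Chebyshev (arcsine) measure
on `[-1,1]`, built from the orthonormal polynomials `p_0 = 1`, `p_j = √2 T_j`
(`j ≥ 1`); so `p_j(x) p_j(y) = 2 T_j(x) T_j(y)` for `j ≥ 1`. -/
noncomputable def chebKer (n : ℕ) (x y : ℝ) : ℝ :=
  ∑ j ∈ Finset.range (n + 1),
    if j = 0 then 1
    else 2 * (Polynomial.Chebyshev.T ℝ (j : ℤ)).eval x *
      (Polynomial.Chebyshev.T ℝ (j : ℤ)).eval y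

/-- The Green function of `ℂ \ [-1,1]` with pole at infinity, restricted to the
real line: `g₁(x) = log(|x| + √(x²-1))` for `|x| > 1`, and `0` on `[-1,1]`. -/
noncomputable def green1 (x : ℝ) : ℝ :=
  if 1 < |x| then Real.log (|x| + Real.sqrt (x ^ 2 - 1)) else 0

open Polynomial Polynomial.Chebyshev Filter Finset Real Topology

lemma two_mul_eval_T_mul_eval_T_self (x : ℝ) (j : ℤ) :
    2 * (T ℝ j).eval x * (T ℝ j).eval x = (T ℝ (2 * j)).eval x + 1 := by
  simpa [two_mul] using congrArg (eval x) (T_mul_T ℝ j j)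

lemma eval_T_two_mul_abs (x : ℝ) (j : ℤ) : (T ℝ (2 * j)).eval |x| = (T ℝ (2 * j)).eval x := by
  rcases abs_choice x with h | h <;> simp [h, T_eval_neg, Int.negOnePow_two_mul]

lemma chebKer_self (n : ℕ) (x : ℝ) :
    chebKer n x x = n + ∑ j ∈ range (n + 1), (T ℝ (2 * j : ℤ)).eval x := by
  induction n with
  | zero => simp [chebKer]
  | succ n ih =>
    rw [chebKer, sum_range_succ, ← chebKer, ih, if_neg n.succ_ne_zero,
      two_mul_eval_T_mul_eval_T_self, sum_range_succ _ (n + 1)]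
    push_cast
    ring

lemma chebKer_abs_self (n : ℕ) (x : ℝ) : chebKer n |x| |x| = chebKer n x x := by
  simp only [chebKer_self, eval_T_two_mul_abs]

lemma tendsto_sum_pow_add_inv_pow_div_pow {q : ℝ} (hq : 1 < q) :
    Tendsto (fun n : ℕ => (∑ j ∈ range (n + 1), (q ^ j + q⁻¹ ^ j)) / q ^ n) atTop
      (𝓝 (q / (q - 1))) := by
  have hs1 : q⁻¹ < 1 := inv_lt_one_of_one_lt₀ hq
  have hpow : Tendsto (fun n : ℕ => q⁻¹ ^ n) atTop (𝓝 0) :=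
    tendsto_pow_atTop_nhds_zero_of_lt_one (by positivity) hs1
  -- by the geometric sum formula, the quotient is a continuous function of `q⁻¹ ^ n`
  have hcont : Continuous fun u : ℝ => (q - u) / (q - 1) + (q⁻¹ * u - 1) * u / (q⁻¹ - 1) := by
    fun_prop
  refine ((hcont.tendsto' 0 _ (by simp)).comp hpow).congr fun n => ?_
  rw [Function.comp_apply, sum_add_distrib, geom_sum_eq hq.ne', geom_sum_eq hs1.ne]
  simp only [inv_pow, pow_succ]
  field_simp

lemma chebKer_cosh_self (n : ℕ) (t : ℝ) :
    chebKer n (cosh t) (cosh t) = n + ∑ j ∈ range (n + 1), cosh (2 * j * t) := by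
  simp only [chebKer_self, T_real_cosh]
  push_cast
  rfl

lemma tendsto_chebKer_cosh_div_exp {t : ℝ} (ht : 0 < t) :
    Tendsto (fun n : ℕ => chebKer n (cosh t) (cosh t) / exp (2 * n * t)) atTop
      (𝓝 (exp (2 * t) / (exp (2 * t) - 1) / 2)) := by
  set q := exp (2 * t)
  have hq : 1 < q := one_lt_exp_iff.mpr (by positivity)
  have hlim := (tendsto_pow_const_div_const_pow_of_one_lt 1 hq).add
    ((tendsto_sum_pow_add_inv_pow_div_pow hq).div_const 2)
  rw [zero_add] at hlim
  refine hlim.congr fun n => ?_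
  have hexp (k : ℕ) : exp (2 * k * t) = q ^ k := by
    rw [← exp_nat_mul]; ring_nf
  have hcosh (j : ℕ) : cosh (2 * j * t) = (q ^ j + q⁻¹ ^ j) / 2 := by
    rw [cosh_eq, ← hexp, inv_pow, ← hexp, exp_neg]
  simp only [chebKer_cosh_self, hcosh, hexp, ← sum_div, pow_one]
  ring

lemma green1_of_one_lt_abs {x : ℝ} (hx : 1 < |x|) : green1 x = arcosh |x| := by
  rw [green1, if_pos hx, arcosh, sq_abs]

lemma green1_of_abs_le_one {x : ℝ} (hx : |x| ≤ 1) : green1 x = 0 :=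
  if_neg hx.not_gt

lemma tendsto_chebKer_div_exp_green1 {x : ℝ} (hx : 1 < |x|) :
    ∃ L : ℝ, 0 < L ∧
      Tendsto (fun n : ℕ => chebKer n x x / exp (2 * n * green1 x)) atTop (𝓝 L) := by
  have ht : 0 < arcosh |x| := arcosh_pos hx
  have hq : 1 < exp (2 * arcosh |x|) := one_lt_exp_iff.mpr (by positivity)
  refine ⟨_, div_pos (div_pos (by positivity) (sub_pos.mpr hq)) two_pos,
    (tendsto_chebKer_cosh_div_exp ht).congr fun n => ?_⟩
  rw [cosh_arcosh hx.le, chebKer_abs_self, green1_of_one_lt_abs hx]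

lemma two_mul_sin_mul_sum_range_cos (θ : ℝ) (n : ℕ) :
    2 * sin θ * ∑ j ∈ range n, cos (2 * j * θ) = sin ((2 * n - 1) * θ) + sin θ := by
  induction n with
  | zero => simp [sin_neg]
  | succ n ih =>
    rw [sum_range_succ, mul_add, ih, two_mul_sin_mul_cos,
      show θ - 2 * n * θ = -((2 * n - 1) * θ) by ring, sin_neg]
    push_cast
    ring_nf

lemma abs_sum_range_cos_le {θ : ℝ} (hθ : 0 < sin θ) (n : ℕ) :
    |∑ j ∈ range n, cos (2 * j * θ)| ≤ 1 / sin θ := by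
  have h : |2 * sin θ * ∑ j ∈ range n, cos (2 * j * θ)| ≤ 2 := by
    rw [two_mul_sin_mul_sum_range_cos]
    exact (abs_add_le _ _).trans (by linarith [abs_sin_le_one ((2 * n - 1) * θ), abs_sin_le_one θ])
  rw [abs_mul, abs_of_pos (by positivity : 0 < 2 * sin θ)] at h
  rw [le_div_iff₀ hθ]
  linarith

lemma tendsto_chebKer_cos_div_succ {θ : ℝ} (hθ : 0 < sin θ) :
    Tendsto (fun n : ℕ => chebKer n (cos θ) (cos θ) / (n + 1)) atTop (𝓝 1) := by
  have hbdd : IsBoundedUnder (· ≤ ·) atTop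
      (fun n : ℕ => ‖∑ j ∈ range (n + 1), cos (2 * j * θ)‖) :=
    isBoundedUnder_of ⟨1 / sin θ, fun n => abs_sum_range_cos_le hθ (n + 1)⟩
  have hlim := (tendsto_natCast_div_add_atTop (1 : ℝ)).add
    (tendsto_one_div_add_atTop_nhds_zero_nat.zero_mul_isBoundedUnder_le hbdd)
  rw [add_zero] at hlim
  refine hlim.congr fun n => ?_
  simp only [chebKer_self, T_real_cos]
  push_cast
  ring

lemma chebKer_one_self (n : ℕ) : chebKer n 1 1 = 2 * n + 1 := by
  simp only [chebKer_self, T_eval_one, sum_const, card_range]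
  ring

lemma tendsto_chebKer_div_succ {x : ℝ} (hx : |x| ≤ 1) :
    ∃ L : ℝ, 0 < L ∧ Tendsto (fun n : ℕ => chebKer n x x / (n + 1)) atTop (𝓝 L) := by
  simp_rw [← chebKer_abs_self _ x]
  rcases hx.lt_or_eq with hlt | heq
  · have hcos : cos (arccos |x|) = |x| := cos_arccos (by linarith [abs_nonneg x]) hx
    have hsin : 0 < sin (arccos |x|) := by
      rw [sin_arccos]
      exact sqrt_pos.mpr (by nlinarith [abs_nonneg x])
    exact ⟨1, one_pos, by simpa only [hcos] using tendsto_chebKer_cos_div_succ hsin⟩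
  · refine ⟨2, two_pos, ?_⟩
    have hlim := (tendsto_const_nhds (x := (2 : ℝ))).sub tendsto_one_div_add_atTop_nhds_zero_nat
    rw [sub_zero] at hlim
    refine hlim.congr fun n => ?_
    rw [heq, chebKer_one_self]
    field_simp
    ring

lemma tendsto_chebKer_mul_chebKer_div_succ_mul_exp {x y : ℝ} (hx : 1 < |x|) (hy : |y| ≤ 1) :
    ∃ L : ℝ, L ≠ 0 ∧ Tendsto
      (fun n : ℕ => chebKer n x x * chebKer n y y /
        (((n : ℝ) + 1) * exp (2 * n * (green1 x + green1 y)))) atTop (𝓝 L) := by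
  obtain ⟨L₁, hL₁, h₁⟩ := tendsto_chebKer_div_exp_green1 hx
  obtain ⟨L₂, hL₂, h₂⟩ := tendsto_chebKer_div_succ hy
  refine ⟨L₁ * L₂, (mul_pos hL₁ hL₂).ne', (h₁.mul h₂).congr fun n => ?_⟩
  rw [green1_of_abs_le_one hy, add_zero, div_mul_div_comm, mul_comm (exp _)]

/-- Asymptotics of the tensor Chebyshev Christoffel–Darboux kernel
`K_N^μ(z,z) = K_n^ω(z_1,z_1) K_n^ω(z_2,z_2)`, `N = (n+1)² - 1`, outside the unit
square: with `g(z) = g₁(z_1) + g₁(z_2)`, the kernel behaves like `e^{2ng(z)}` in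
the corner case and like `(n+1) e^{2ng(z)}` otherwise. -/
theorem statement19 (z : ℝ × ℝ)
    (hz : z ∉ (Set.Icc (-1 : ℝ) 1) ×ˢ (Set.Icc (-1 : ℝ) 1)) :
    (1 < |z.1| → 1 < |z.2| →
      ∃ L : ℝ, L ≠ 0 ∧ Filter.Tendsto
        (fun n : ℕ => chebKer n z.1 z.1 * chebKer n z.2 z.2 /
          Real.exp (2 * n * (green1 z.1 + green1 z.2)))
        Filter.atTop (nhds L)) ∧
    (¬ (1 < |z.1| ∧ 1 < |z.2|) →
      ∃ L : ℝ, L ≠ 0 ∧ Filter.Tendsto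
        (fun n : ℕ => chebKer n z.1 z.1 * chebKer n z.2 z.2 /
          (((n : ℝ) + 1) * Real.exp (2 * n * (green1 z.1 + green1 z.2))))
        Filter.atTop (nhds L)) := by
  refine ⟨fun h₁ h₂ => ?_, fun h => ?_⟩
  · obtain ⟨L₁, hL₁, hT₁⟩ := tendsto_chebKer_div_exp_green1 h₁
    obtain ⟨L₂, hL₂, hT₂⟩ := tendsto_chebKer_div_exp_green1 h₂
    refine ⟨L₁ * L₂, (mul_pos hL₁ hL₂).ne', (hT₁.mul hT₂).congr fun n => ?_⟩
    rw [mul_add, exp_add, div_mul_div_comm]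
  · have hout : ¬ (|z.1| ≤ 1 ∧ |z.2| ≤ 1) := by
      simpa only [Set.mem_prod, Set.mem_Icc, ← abs_le] using hz
    rcases le_or_gt |z.1| 1 with h₁ | h₁
    · have h₂ : 1 < |z.2| := not_le.mp fun h₂ => hout ⟨h₁, h₂⟩
      simpa only [mul_comm (chebKer _ z.1 z.1), add_comm (green1 z.1)] using
        tendsto_chebKer_mul_chebKer_div_succ_mul_exp h₂ h₁
    · exact tendsto_chebKer_mul_chebKer_div_succ_mul_exp h₁ (not_lt.mp fun h₂ => h ⟨h₁, h₂⟩)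

end CD2
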